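/- Let R := max_{i∈[n]} ‖a_i‖, let μ > 0, and let θ̂* ∈ ℝ^d be a unit vector with y_i a_iᵀθ̂* ≥ μ for all i ∈ [n]. Set α := R²/μ. If θ̂ ∈ ℝ^d and the set S := {i ∈ [n] : y_i a_iᵀθ̂ ≤ 0} is nonempty, then the Normalized Batch Perceptron update θ̂⁺ := θ̂ + (1/|S|) Σ_{i∈S} y_i a_i satisfies ‖θ̂⁺ − α θ̂*‖² ≤ ‖θ̂ − α θ̂*‖² − R². -/
import Mathlib


open scoped RealInnerProductSpace BigOperators

/-- **One-step decrease for the Normalized Batch Perceptron.** With `α = R²/μ`, if the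
misclassified set `S` at `θ̂` is nonempty, the Normalized Batch Perceptron update decreases
the squared distance to `α θ̂*` by at least `R²`. -/
theorem normalized_batch_perceptron_step_decrease {d n : ℕ}
    (a : Fin n → EuclideanSpace ℝ (Fin d)) (y : Fin n → ℝ)
    (hy : ∀ i, y i = 1 ∨ y i = -1)
    (μ R : ℝ) (hμ : 0 < μ)
    (hR : IsGreatest (Set.range fun i => ‖a i‖) R)
    (θstar : EuclideanSpace ℝ (Fin d)) (hstar : ‖θstar‖ = 1)
    (hmargin : ∀ i, μ ≤ y i * ⟪a i, θstar⟫)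
    (θhat : EuclideanSpace ℝ (Fin d))
    (hS : (Finset.univ.filter (fun i => y i * ⟪a i, θhat⟫ ≤ 0)).Nonempty) :
    ‖θhat + (((Finset.univ.filter (fun i => y i * ⟪a i, θhat⟫ ≤ 0)).card : ℝ))⁻¹ •
        (∑ i ∈ Finset.univ.filter (fun i => y i * ⟪a i, θhat⟫ ≤ 0), y i • a i)
      - (R ^ 2 / μ) • θstar‖ ^ 2
      ≤ ‖θhat - (R ^ 2 / μ) • θstar‖ ^ 2 - R ^ 2 := by
  set S := Finset.univ.filter (fun i => y i * ⟪a i, θhat⟫ ≤ 0) with hSdef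
  set g : EuclideanSpace ℝ (Fin d) := ((S.card : ℝ))⁻¹ • (∑ i ∈ S, y i • a i) with hg
  have hc : (0:ℝ) < (S.card : ℝ) := by
    exact_mod_cast Finset.card_pos.mpr hS
  have hRa : ∀ i, ‖a i‖ ≤ R := fun i => hR.2 ⟨i, rfl⟩
  have hR0 : 0 ≤ R := by
    obtain ⟨i⟩ := hS
    exact (norm_nonneg (a i)).trans (hRa i)
  have habs : ∀ i, |y i| = 1 := by
    intro i; rcases hy i with h | h <;> simp [h]
  -- norm bound on g
  have hgnorm : ‖g‖ ≤ R := by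
    have h1 : ‖∑ i ∈ S, y i • a i‖ ≤ (S.card : ℝ) * R := by
      calc ‖∑ i ∈ S, y i • a i‖ ≤ ∑ i ∈ S, ‖y i • a i‖ := norm_sum_le _ _
        _ ≤ ∑ i ∈ S, R := by
            refine Finset.sum_le_sum fun i _ => ?_
            rw [norm_smul, Real.norm_eq_abs, habs i, one_mul]
            exact hRa i
        _ = (S.card : ℝ) * R := by rw [Finset.sum_const, nsmul_eq_mul]
    rw [hg, norm_smul, Real.norm_eq_abs, abs_of_pos (inv_pos.mpr hc)]
    calc ((S.card:ℝ))⁻¹ * ‖∑ i ∈ S, y i • a i‖ ≤ ((S.card:ℝ))⁻¹ * ((S.card : ℝ) * R) := by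
          exact mul_le_mul_of_nonneg_left h1 (inv_nonneg.mpr hc.le)
      _ = R := by field_simp
  -- inner products
  have hgθ : ⟪g, θhat⟫ ≤ 0 := by
    rw [hg, real_inner_smul_left, sum_inner]
    have : ∑ i ∈ S, ⟪y i • a i, θhat⟫ ≤ 0 := by
      refine Finset.sum_nonpos fun i hi => ?_
      rw [real_inner_smul_left]
      exact (Finset.mem_filter.mp hi).2
    exact mul_nonpos_of_nonneg_of_nonpos (inv_nonneg.mpr hc.le) this
  have hgstar : μ ≤ ⟪g, θstar⟫ := by
    rw [hg, real_inner_smul_left, sum_inner]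
    have : (S.card : ℝ) * μ ≤ ∑ i ∈ S, ⟪y i • a i, θstar⟫ := by
      calc (S.card : ℝ) * μ = ∑ _i ∈ S, μ := by rw [Finset.sum_const, nsmul_eq_mul]
        _ ≤ ∑ i ∈ S, ⟪y i • a i, θstar⟫ := by
            refine Finset.sum_le_sum fun i _ => ?_
            rw [real_inner_smul_left]
            exact hmargin i
    calc μ = ((S.card:ℝ))⁻¹ * ((S.card : ℝ) * μ) := by field_simp
      _ ≤ ((S.card:ℝ))⁻¹ * ∑ i ∈ S, ⟪y i • a i, θstar⟫ :=
          mul_le_mul_of_nonneg_left this (inv_nonneg.mpr hc.le)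
  -- main computation
  have hrw : θhat + g - (R ^ 2 / μ) • θstar = (θhat - (R ^ 2 / μ) • θstar) + g := by abel
  rw [hrw, norm_add_sq_real]
  have hinner : ⟪θhat - (R ^ 2 / μ) • θstar, g⟫ ≤ -R ^ 2 := by
    rw [inner_sub_left, real_inner_smul_left]
    have h1 : ⟪θhat, g⟫ ≤ 0 := by rw [real_inner_comm]; exact hgθ
    have h2 : R ^ 2 ≤ R ^ 2 / μ * ⟪θstar, g⟫ := by
      rw [real_inner_comm]
      have := mul_le_mul_of_nonneg_left hgstar (div_nonneg (sq_nonneg R) hμ.le)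
      calc R ^ 2 = R ^ 2 / μ * μ := by field_simp
        _ ≤ R ^ 2 / μ * ⟪g, θstar⟫ := this
    linarith
  have hg2 : ‖g‖ ^ 2 ≤ R ^ 2 := by
    have := sq_le_sq' (by linarith [norm_nonneg g] : -R ≤ ‖g‖) hgnorm
    simpa using this
  nlinarith [hinner, hg2]
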